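/- arXiv:2305.00188 — 3 statements merged into one kernel-verified Lean document; each statement's English description precedes it below -/
import Mathlib

section
/- For an ILP min{cᵀx : Ax ≤ b, x ∈ ℤⁿ} with some cⱼ ≠ 0 that has a finite optimal solution, the minimum of cᵀx over all integer points of P equals the minimum of cᵀx over all boundary points of P: min_{x ∈ P ∩ ℤⁿ} cᵀx = min_{x ∈ δ(P) ∩ ℤⁿ} cᵀx. -/
open Finset

/-- Membership of a real point in the polyhedron `P = {x | Ax ≤ b}`. -/
def memP (m n : ℕ) (A : Fin m → Fin n → ℝ) (b : Fin m → ℝ) (y : Fin n → ℝ) : Prop :=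
  ∀ i, ∑ l, A i l * y l ≤ b i

/-- `x` is a boundary point of `P`: a feasible integer point having a
neighbor `x ± eⱼ` outside `P`. -/
def boundaryPt (m n : ℕ) (A : Fin m → Fin n → ℝ) (b : Fin m → ℝ) (x : Fin n → ℤ) : Prop :=
  memP m n A b (fun l => (x l : ℝ)) ∧
    ∃ j : Fin n,
      ¬ memP m n A b (fun l => (((x + Pi.single j 1) : Fin n → ℤ) l : ℝ)) ∨
      ¬ memP m n A b (fun l => (((x - Pi.single j 1) : Fin n → ℤ) l : ℝ))

lemma sum_mul_intCast_add_single {ι : Type*} [Fintype ι] [DecidableEq ι] (c : ι → ℝ)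
    (x : ι → ℤ) (j : ι) (s : ℤ) :
    ∑ l, c l * ((x + Pi.single j s : ι → ℤ) l : ℝ) = ∑ l, c l * (x l : ℝ) + c j * s := by
  simp only [Pi.add_apply, Int.cast_add, mul_add, sum_add_distrib]
  congr 1
  rw [sum_eq_single j (fun l _ hl => by simp [hl]) (by simp)]
  simp

/-- Stepping from `x` against the sign of `c j` strictly decreases the objective, so that
neighbour of a minimizer is infeasible. -/
lemma boundaryPt_of_forall_le {m n : ℕ} {A : Fin m → Fin n → ℝ} {b : Fin m → ℝ}
    {c : Fin n → ℝ} {j : Fin n} (hc : c j ≠ 0) {x : Fin n → ℤ}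
    (hx : memP m n A b (fun l => (x l : ℝ)))
    (hle : ∀ y : Fin n → ℤ, memP m n A b (fun l => (y l : ℝ)) →
      ∑ l, c l * (x l : ℝ) ≤ ∑ l, c l * (y l : ℝ)) :
    boundaryPt m n A b x := by
  refine ⟨hx, j, ?_⟩
  rcases hc.lt_or_gt with hneg | hpos
  · refine .inl fun hplus => ?_
    have := hle _ hplus
    rw [sum_mul_intCast_add_single] at this
    push_cast at this
    linarith
  · refine .inr fun hminus => ?_
    have := hle _ hminus
    rw [sub_eq_add_neg, ← Pi.single_neg, sum_mul_intCast_add_single] at this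
    push_cast at this
    linarith

/-- If the ILP (with some nonzero objective coefficient) attains a finite
minimum over the integer points of `P`, then the minimum of `cᵀx` over
`P ∩ ℤⁿ` equals the minimum over the boundary points `δ(P) ∩ ℤⁿ`. -/
theorem stmt_3 (m n : ℕ) (A : Fin m → Fin n → ℝ) (b : Fin m → ℝ) (c : Fin n → ℝ)
    (j₀ : Fin n) (hc : c j₀ ≠ 0)
    (xstar : Fin n → ℤ)
    (hmin : IsLeast {v : ℝ | ∃ x : Fin n → ℤ, memP m n A b (fun l => (x l : ℝ)) ∧
      v = ∑ l, c l * (x l : ℝ)} (∑ l, c l * (xstar l : ℝ))) :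
    sInf {v : ℝ | ∃ x : Fin n → ℤ, memP m n A b (fun l => (x l : ℝ)) ∧
        v = ∑ l, c l * (x l : ℝ)} =
    sInf {v : ℝ | ∃ x : Fin n → ℤ, boundaryPt m n A b x ∧
        v = ∑ l, c l * (x l : ℝ)} := by
  obtain ⟨x, hx, hv⟩ := hmin.1
  have hbd : boundaryPt m n A b x :=
    boundaryPt_of_forall_le hc hx fun y hy => hv ▸ hmin.2 ⟨y, hy, rfl⟩
  rw [hmin.csInf_eq]
  exact Eq.symm (IsLeast.csInf_eq ⟨⟨x, hbd, hv⟩, fun _ ⟨y, hy, hw⟩ => hmin.2 ⟨y, hy.1, hw⟩⟩)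
end

section
/- Let x ∈ P ∩ ℤⁿ be feasible, fix coordinate j with objective coefficient cⱼ < 0, and let x' be obtained from x by the lift move: setting x'ⱼ to the upper bound of the local feasible domain lfd(xⱼ, x) (assumed finite). Then x' ∈ δ(P): x' is feasible and x' + eⱼ ∉ P. -/
/-!
Moving only `xⱼ` to `t` changes row `i` of `Ax` by `A_{ij} (t - xⱼ)`, so for `A_{ij} ≠ 0` the row
stays satisfied exactly when `t` obeys the bound `ldc(xⱼ, conᵢ, x)`, and rows with `A_{ij} = 0`
are unaffected. Hence at a feasible `x` the local feasible domain is exactly the set of feasible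
values of `xⱼ`: its maximum `t` is feasible and `t + 1` is not.
-/

open Finset

/-- The local feasible domain `lfd(xⱼ, x)` of coordinate `j` at `x`, as a set
of integer values for `xⱼ`. -/
def lfd (m n : ℕ) (A : Fin m → Fin n → ℝ) (b : Fin m → ℝ)
    (ℓ u : Fin n → ℤ) (x : Fin n → ℤ) (j : Fin n) : Set ℤ :=
  {t : ℤ | ℓ j ≤ t ∧ t ≤ u j ∧
    (∀ i, 0 < A i j → t ≤ x j + ⌊(b i - ∑ l, A i l * (x l : ℝ)) / A i j⌋) ∧
    (∀ i, A i j < 0 → x j + ⌈(b i - ∑ l, A i l * (x l : ℝ)) / A i j⌉ ≤ t)}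

def InPolytope (m n : ℕ) (A : Fin m → Fin n → ℝ) (b : Fin m → ℝ)
    (ℓ u : Fin n → ℤ) (y : Fin n → ℤ) : Prop :=
  (∀ i, ∑ l, A i l * (y l : ℝ) ≤ b i) ∧ (∀ l, ℓ l ≤ y l) ∧ (∀ l, y l ≤ u l)

section RowUpdate

variable {ι : Type*} [Fintype ι] [DecidableEq ι] (a : ι → ℝ) (x : ι → ℤ) (j : ι) (v : ℤ)
  (β : ℝ)

theorem sum_mul_update_eq :
    ∑ l, a l * (Function.update x j v l : ℝ) = ∑ l, a l * (x l : ℝ) + a j * (v - x j) := by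
  rw [← Finset.sum_erase_add _ _ (mem_univ j), ← Finset.sum_erase_add _ _ (mem_univ j),
    Finset.sum_congr rfl fun l hl => by rw [Function.update_of_ne (ne_of_mem_erase hl)],
    Function.update_self]
  ring

theorem sum_mul_update_le_iff_of_pos (h : 0 < a j) :
    ∑ l, a l * (Function.update x j v l : ℝ) ≤ β ↔
      v ≤ x j + ⌊(β - ∑ l, a l * (x l : ℝ)) / a j⌋ := by
  rw [← sub_le_iff_le_add', Int.le_floor, le_div_iff₀ h, sum_mul_update_eq]
  push_cast
  constructor <;> intro <;> linarith

theorem sum_mul_update_le_iff_of_neg (h : a j < 0) :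
    ∑ l, a l * (Function.update x j v l : ℝ) ≤ β ↔
      x j + ⌈(β - ∑ l, a l * (x l : ℝ)) / a j⌉ ≤ v := by
  rw [← le_sub_iff_add_le', Int.ceil_le, div_le_iff_of_neg h, sum_mul_update_eq]
  push_cast
  constructor <;> intro <;> linarith

theorem sum_mul_update_le_iff_of_eq_zero (h : a j = 0) :
    ∑ l, a l * (Function.update x j v l : ℝ) ≤ β ↔ ∑ l, a l * (x l : ℝ) ≤ β := by
  rw [sum_mul_update_eq, h, zero_mul, add_zero]

end RowUpdate

theorem mem_lfd_iff_inPolytope_update {m n : ℕ} {A : Fin m → Fin n → ℝ} {b : Fin m → ℝ}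
    {ℓ u x : Fin n → ℤ} (hx : InPolytope m n A b ℓ u x) (j : Fin n) (t : ℤ) :
    t ∈ lfd m n A b ℓ u x j ↔ InPolytope m n A b ℓ u (Function.update x j t) := by
  obtain ⟨hA, hl, hu⟩ := hx
  have rows : (∀ i, ∑ l, A i l * (Function.update x j t l : ℝ) ≤ b i) ↔
      (∀ i, 0 < A i j → t ≤ x j + ⌊(b i - ∑ l, A i l * (x l : ℝ)) / A i j⌋) ∧
      (∀ i, A i j < 0 → x j + ⌈(b i - ∑ l, A i l * (x l : ℝ)) / A i j⌉ ≤ t) := by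
    refine ⟨fun h => ⟨fun i hi => ?_, fun i hi => ?_⟩, fun ⟨hpos, hneg⟩ i => ?_⟩
    · exact (sum_mul_update_le_iff_of_pos _ _ _ _ _ hi).1 (h i)
    · exact (sum_mul_update_le_iff_of_neg _ _ _ _ _ hi).1 (h i)
    · rcases lt_trichotomy (A i j) 0 with hi | hi | hi
      · exact (sum_mul_update_le_iff_of_neg _ _ _ _ _ hi).2 (hneg i hi)
      · exact (sum_mul_update_le_iff_of_eq_zero _ _ _ _ _ hi).2 (hA i)
      · exact (sum_mul_update_le_iff_of_pos _ _ _ _ _ hi).2 (hpos i hi)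
  have lower : (∀ l, ℓ l ≤ Function.update x j t l) ↔ ℓ j ≤ t := by
    rw [Function.forall_update_iff (p := fun l y => ℓ l ≤ y)]
    exact and_iff_left fun l _ => hl l
  have upper : (∀ l, Function.update x j t l ≤ u l) ↔ t ≤ u j := by
    rw [Function.forall_update_iff (p := fun l y => y ≤ u l)]
    exact and_iff_left fun l _ => hu l
  rw [InPolytope, rows, lower, upper]
  simp only [lfd, Set.mem_ofPred_eq]
  tauto

theorem stmt_10_general (m n : ℕ) (A : Fin m → Fin n → ℝ) (b : Fin m → ℝ)
    (ℓ u : Fin n → ℤ) (x : Fin n → ℤ)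
    (hA : ∀ i, ∑ l, A i l * (x l : ℝ) ≤ b i)
    (hl : ∀ l, ℓ l ≤ x l) (hu : ∀ l, x l ≤ u l)
    (j : Fin n)
    (t : ℤ) (ht : IsGreatest (lfd m n A b ℓ u x j) t) :
    ((∀ i, ∑ l, A i l * ((Function.update x j t) l : ℝ) ≤ b i) ∧
      (∀ l, ℓ l ≤ (Function.update x j t) l) ∧
      (∀ l, (Function.update x j t) l ≤ u l)) ∧
    ¬ ((∀ i, ∑ l, A i l * ((Function.update x j (t + 1)) l : ℝ) ≤ b i) ∧
      (∀ l, ℓ l ≤ (Function.update x j (t + 1)) l) ∧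
      (∀ l, (Function.update x j (t + 1)) l ≤ u l)) := by
  have hmem := mem_lfd_iff_inPolytope_update ⟨hA, hl, hu⟩ j
  refine ⟨(hmem t).1 ht.1, fun hsucc => ?_⟩
  have := ht.2 ((hmem (t + 1)).2 hsucc)
  omega

/-- Lift move: if `x` is feasible for `P = {y | Ay ≤ b, ℓ ≤ y ≤ u}`, `cⱼ < 0`,
and `t` is the (finite, attained) upper bound of `lfd(xⱼ, x)`, then the
lift-move result `x' = x[xⱼ := t]` is a boundary point: `x'` is feasible and
`x' + eⱼ ∉ P`. -/
theorem stmt_10 (m n : ℕ) (A : Fin m → Fin n → ℝ) (b : Fin m → ℝ)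
    (ℓ u : Fin n → ℤ) (c : Fin n → ℝ) (x : Fin n → ℤ)
    (hA : ∀ i, ∑ l, A i l * (x l : ℝ) ≤ b i)
    (hl : ∀ l, ℓ l ≤ x l) (hu : ∀ l, x l ≤ u l)
    (j : Fin n) (hcj : c j < 0)
    (t : ℤ) (ht : IsGreatest (lfd m n A b ℓ u x j) t) :
    ((∀ i, ∑ l, A i l * ((Function.update x j t) l : ℝ) ≤ b i) ∧
      (∀ l, ℓ l ≤ (Function.update x j t) l) ∧
      (∀ l, (Function.update x j t) l ≤ u l)) ∧
    ¬ ((∀ i, ∑ l, A i l * ((Function.update x j (t + 1)) l : ℝ) ≤ b i) ∧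
      (∀ l, ℓ l ≤ (Function.update x j (t + 1)) l) ∧
      (∀ l, (Function.update x j (t + 1)) l ≤ u l)) :=
  stmt_10_general m n A b ℓ u x hA hl hu j t ht
end

section
/- Let x ∈ P ∩ ℤⁿ be feasible, j a coordinate, and let U be the upper bound of the local feasible domain lfd(xⱼ, x) (assume it is finite and attained via some constraint i with A_{ij} > 0, i.e., U = xⱼ + ⌊Δᵢ/A_{ij}⌋ ≤ uⱼ where Δᵢ = b_i − A_i·x). Then replacing xⱼ by U keeps all constraints satisfied, and replacing xⱼ by U + 1 violates constraint i. -/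
/-!
Moving `xⱼ` to `xⱼ + t` changes row `i'` by `A_{i'j} t`. Since `Δᵢ ≥ 0`, `U ≥ xⱼ`, so rows with
`A_{i'j} ≤ 0` only gain slack; a row with `A_{i'j} > 0` stays satisfied exactly when
`t ≤ ⌊Δ_{i'} / A_{i'j}⌋`, and `U` attains this floor for row `i`, so `U + 1` overshoots it.
-/

open Function

theorem sum_mul_intCast_update {ι R : Type*} [Fintype ι] [DecidableEq ι] [CommRing R]
    (a : ι → R) (x : ι → ℤ) (j : ι) (c : ℤ) :
    ∑ l, a l * (update x j c l : R) = ∑ l, a l * x l + a j * ((c - x j : ℤ) : R) := by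
  rw [Pi.update_eq_sub_add_single]
  simp only [Pi.add_apply, Pi.sub_apply, Pi.single_apply, Int.cast_add, Int.cast_sub, Int.cast_ite,
    Int.cast_zero, mul_add, mul_sub, mul_ite, mul_zero, Finset.sum_add_distrib, Finset.sum_sub_distrib,
    Finset.sum_ite_eq', Finset.mem_univ, ↓reduceIte]
  ring

theorem add_mul_le_iff_le_floor_div {K : Type*} [Field K] [LinearOrder K] [IsStrictOrderedRing K]
    [FloorRing K] {a s b : K} (ha : 0 < a) (t : ℤ) :
    s + a * t ≤ b ↔ t ≤ ⌊(b - s) / a⌋ := by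
  rw [Int.le_floor, le_div_iff₀' ha, le_sub_iff_add_le']

/-- If `x` is feasible for `P = {y | Ay ≤ b, ℓ ≤ y ≤ u}` and the upper bound
`U = xⱼ + ⌊Δᵢ/A_{ij}⌋` of the local feasible domain of coordinate `j` is
attained via constraint `i` with `A_{ij} > 0` (so `U ≤ uⱼ` and `U` is below
the local bound coming from every other constraint with positive coefficient),
then replacing `xⱼ` by `U` keeps all constraints and bounds satisfied, while
replacing `xⱼ` by `U + 1` violates constraint `i`. -/
theorem stmt_19 (m n : ℕ) (A : Fin m → Fin n → ℝ) (b : Fin m → ℝ)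
    (ℓ u : Fin n → ℤ) (x : Fin n → ℤ)
    (hA : ∀ i', ∑ l, A i' l * (x l : ℝ) ≤ b i')
    (hl : ∀ l, ℓ l ≤ x l) (hu : ∀ l, x l ≤ u l)
    (j : Fin n) (i : Fin m) (hAij : 0 < A i j)
    (U : ℤ) (hU : U = x j + ⌊(b i - ∑ l, A i l * (x l : ℝ)) / A i j⌋)
    (hUu : U ≤ u j)
    (hUmin : ∀ i', 0 < A i' j →
      U ≤ x j + ⌊(b i' - ∑ l, A i' l * (x l : ℝ)) / A i' j⌋) :
    ((∀ i', ∑ l, A i' l * ((Function.update x j U) l : ℝ) ≤ b i') ∧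
      (∀ l, ℓ l ≤ (Function.update x j U) l) ∧
      (∀ l, (Function.update x j U) l ≤ u l)) ∧
    b i < ∑ l, A i l * ((Function.update x j (U + 1)) l : ℝ) := by
  have hxU : x j ≤ U := by
    have := Int.floor_nonneg.2 (div_nonneg (sub_nonneg.2 (hA i)) hAij.le)
    omega
  refine ⟨⟨fun i' => ?_, le_update_iff.2 ⟨(hl j).trans hxU, fun l _ => hl l⟩,
    update_le_iff.2 ⟨hUu, fun l _ => hu l⟩⟩, ?_⟩
  · rw [sum_mul_intCast_update]
    rcases le_or_gt (A i' j) 0 with hnonpos | hpos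
    · have : A i' j * ((U - x j : ℤ) : ℝ) ≤ 0 :=
        mul_nonpos_of_nonpos_of_nonneg hnonpos (by exact_mod_cast sub_nonneg.2 hxU)
      linarith [hA i']
    · exact (add_mul_le_iff_le_floor_div hpos _).2 (by linarith [hUmin i' hpos])
  · rw [sum_mul_intCast_update, ← not_le, add_mul_le_iff_le_floor_div hAij]
    omega
end
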